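/- Let q be a prime power, let k ≥ 3, and set η = q^{−(k−2)/4}. Then the inner-product map IP : 𝔽_q^k × 𝔽_q^k → 𝔽_q, IP(x,y) = Σ_{i=1}^{k} x_i y_i, is a (q^k, q, η)-expander coloring; that is, for all sets X, Y ⊆ 𝔽_q^k with |X|, |Y| ≥ η·q^k and every v ∈ 𝔽_q, one has |{(x,y) ∈ X×Y : ⟨x,y⟩ = v}| = (|X||Y|/q)(1±η). -/

import Mathlib

/-!
For `y ∈ 𝔽_q^k` put `f_v(y) = #{x ∈ X | ⟨x, y⟩ = v}`. Counting collisions gives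
`∑_y ∑_v (f_v(y) - |X|/q)² = |X|(q^k - q^(k-1))`, since for `x ≠ x'` exactly `q^(k-1)` vectors `y`
satisfy `⟨x - x', y⟩ = 0`. The number of pairs in `X × Y` of colour `v` is `∑_{y ∈ Y} f_v(y)`, so by
Cauchy–Schwarz its squared deviation from `|X||Y|/q` is at most `|X||Y|q^k`, and this is at most
`(η|X||Y|/q)²` as soon as `|X||Y| ≥ η² q^(2k)`, because `η⁴ q^k = q²`.
-/

open Finset

def Approx (a b η : ℝ) : Prop := b * (1 - η) ≤ a ∧ a ≤ b * (1 + η)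

lemma Approx.of_sq_sub_le {a b η : ℝ} (hbη : 0 ≤ b * η) (h : (a - b) ^ 2 ≤ (b * η) ^ 2) :
    Approx a b η := by
  obtain ⟨hlo, hhi⟩ := abs_le_of_sq_le_sq' h hbη
  constructor <;> linarith

lemma card_filter_product_eq_sum {α β : Type*} (s : Finset α) (t : Finset β)
    (P : α → β → Prop) [∀ a b, Decidable (P a b)] :
    #{p ∈ s ×ˢ t | P p.1 p.2} = ∑ b ∈ t, #{a ∈ s | P a b} := by
  rw [card_filter, sum_product, sum_comm]
  exact sum_congr rfl fun b _ ↦ (card_filter _ _).symm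

section Fiber

variable {α β : Type*} [Fintype β] [DecidableEq β]

lemma sum_sq_card_fiber (s : Finset α) (φ : α → β) :
    ∑ b, #{a ∈ s | φ a = b} ^ 2 = #{p ∈ s ×ˢ s | φ p.1 = φ p.2} := by
  rw [card_eq_sum_card_fiberwise (f := fun p ↦ φ p.1) (t := univ) fun _ _ ↦ mem_univ _]
  refine sum_congr rfl fun b _ ↦ ?_
  rw [sq, ← card_product, filter_filter, ← filter_product]
  congr 1
  refine filter_congr fun p _ ↦ ?_
  constructor
  · rintro ⟨h₁, h₂⟩; exact ⟨h₁.trans h₂.symm, h₁⟩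
  · rintro ⟨h₁, h₂⟩; exact ⟨h₂, h₁.symm.trans h₂⟩

lemma sum_sq_card_fiber_sub_div [Nonempty β] (s : Finset α) (φ : α → β) :
    ∑ b, ((#{a ∈ s | φ a = b} : ℝ) - #s / Fintype.card β) ^ 2
      = #{p ∈ s ×ˢ s | φ p.1 = φ p.2} - #s ^ 2 / Fintype.card β := by
  have hβ : (Fintype.card β : ℝ) ≠ 0 := by positivity
  have hsum : ∑ b, (#{a ∈ s | φ a = b} : ℝ) = #s := by
    exact_mod_cast (card_eq_sum_card_fiberwise fun a _ ↦ mem_univ (φ a)).symm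
  have hsq : ∑ b, (#{a ∈ s | φ a = b} : ℝ) ^ 2 = #{p ∈ s ×ˢ s | φ p.1 = φ p.2} := by
    exact_mod_cast sum_sq_card_fiber s φ
  simp only [sub_sq, sum_add_distrib, sum_sub_distrib, ← sum_mul, ← mul_sum, hsum, hsq,
    sum_const, card_univ, nsmul_eq_mul]
  field_simp
  ring

end Fiber

section DotProduct

variable {ι F : Type*} [Fintype ι] [DecidableEq ι] [Field F] [Fintype F] [DecidableEq F]

lemma card_mul_card_dotProduct_eq_zero {z : ι → F} (hz : z ≠ 0) :
    Fintype.card F * #{y : ι → F | z ⬝ᵥ y = 0} = Fintype.card F ^ Fintype.card ι := by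
  let f : (ι → F) →+ F := AddMonoidHom.mk' (z ⬝ᵥ ·) (dotProduct_add z)
  have hf : Function.Surjective f := fun c ↦ by
    obtain ⟨i, hi⟩ := Function.ne_iff.mp hz
    exact ⟨Pi.single i (c / z i), by simp [f, dotProduct_single, mul_div_cancel₀ _ hi]⟩
  have h := AddSubgroup.card_mul_index f.ker
  rw [AddSubgroup.index_ker, AddMonoidHom.range_eq_top.mpr hf, AddSubgroup.card_top] at h
  simp only [Nat.card_eq_fintype_card, Fintype.card_pi, prod_const, card_univ] at h
  rw [← h, mul_comm, ← Fintype.card_subtype]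
  exact congrArg (· * _) (Fintype.card_congr (.refl _))

lemma card_dotProduct_eq_dotProduct (x x' : ι → F) :
    (#{y : ι → F | x ⬝ᵥ y = x' ⬝ᵥ y} : ℝ)
      = if x = x' then (Fintype.card F : ℝ) ^ Fintype.card ι
        else (Fintype.card F : ℝ) ^ Fintype.card ι / Fintype.card F := by
  split_ifs with h
  · simp [h, Fintype.card_pi]
  · have hq : (Fintype.card F : ℝ) ≠ 0 := by positivity
    have hker := card_mul_card_dotProduct_eq_zero (sub_ne_zero.mpr h)
    simp only [sub_dotProduct, sub_eq_zero] at hker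
    rw [eq_div_iff hq, mul_comm]
    exact_mod_cast hker

lemma sum_card_collision_dotProduct (X : Finset (ι → F)) :
    ∑ y : ι → F, (#{p ∈ X ×ˢ X | p.1 ⬝ᵥ y = p.2 ⬝ᵥ y} : ℝ)
      = #X ^ 2 * ((Fintype.card F : ℝ) ^ Fintype.card ι / Fintype.card F)
        + #X * ((Fintype.card F : ℝ) ^ Fintype.card ι
          - (Fintype.card F : ℝ) ^ Fintype.card ι / Fintype.card F) := by
  have hswap : ∑ y : ι → F, #{p ∈ X ×ˢ X | p.1 ⬝ᵥ y = p.2 ⬝ᵥ y}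
      = ∑ p ∈ X ×ˢ X, #{y : ι → F | p.1 ⬝ᵥ y = p.2 ⬝ᵥ y} := by
    simp only [card_filter]
    exact sum_comm
  rw [← Nat.cast_sum, hswap, Nat.cast_sum, sum_product]
  simp only [card_dotProduct_eq_dotProduct]
  generalize (Fintype.card F : ℝ) ^ Fintype.card ι = Q
  generalize (Fintype.card F : ℝ) = q
  have hite : ∀ x x' : ι → F, (if x = x' then Q else Q / q)
      = Q / q + if x = x' then Q - Q / q else 0 := by
    intro x x'
    split_ifs <;> ring
  simp only [hite, sum_add_distrib, sum_ite_eq, sum_ite_mem, inter_self, sum_const,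
    nsmul_eq_mul]
  ring

lemma sum_sum_sq_card_dotProduct_sub (X : Finset (ι → F)) :
    ∑ y : ι → F, ∑ v : F, ((#{x ∈ X | x ⬝ᵥ y = v} : ℝ) - #X / Fintype.card F) ^ 2
      = #X * ((Fintype.card F : ℝ) ^ Fintype.card ι
          - (Fintype.card F : ℝ) ^ Fintype.card ι / Fintype.card F) := by
  simp only [sum_sq_card_fiber_sub_div, sum_sub_distrib, sum_card_collision_dotProduct,
    sum_const, card_univ, Fintype.card_pi, prod_const, nsmul_eq_mul]
  push_cast
  ring

theorem sq_card_dotProduct_eq_sub_le (X Y : Finset (ι → F)) (v : F) :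
    ((#{p ∈ X ×ˢ Y | p.1 ⬝ᵥ p.2 = v} : ℝ) - #X * #Y / Fintype.card F) ^ 2
      ≤ #X * #Y * (Fintype.card F : ℝ) ^ Fintype.card ι := by
  set g : (ι → F) → F → ℝ := fun y w ↦ (#{x ∈ X | x ⬝ᵥ y = w} : ℝ) - #X / Fintype.card F
  have hsplit : (#{p ∈ X ×ˢ Y | p.1 ⬝ᵥ p.2 = v} : ℝ) - #X * #Y / Fintype.card F
      = ∑ y ∈ Y, g y v := by
    rw [card_filter_product_eq_sum X Y (fun x y ↦ x ⬝ᵥ y = v)]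
    simp only [g, Nat.cast_sum, sum_sub_distrib, sum_const, nsmul_eq_mul]
    ring
  have hvar : ∑ y ∈ Y, g y v ^ 2 ≤ #X * (Fintype.card F : ℝ) ^ Fintype.card ι := calc
    _ ≤ ∑ y, g y v ^ 2 := sum_le_univ_sum_of_nonneg fun _ ↦ sq_nonneg _
    _ ≤ ∑ y, ∑ w, g y w ^ 2 :=
      sum_le_sum fun y _ ↦
        single_le_sum (f := fun w ↦ g y w ^ 2) (fun _ _ ↦ sq_nonneg _) (mem_univ v)
    _ = #X * ((Fintype.card F : ℝ) ^ Fintype.card ι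
          - (Fintype.card F : ℝ) ^ Fintype.card ι / Fintype.card F) :=
      sum_sum_sq_card_dotProduct_sub X
    _ ≤ _ := by gcongr; exact sub_le_self _ (by positivity)
  calc _ = (∑ y ∈ Y, g y v) ^ 2 := by rw [hsplit]
    _ ≤ #Y * ∑ y ∈ Y, g y v ^ 2 := sq_sum_le_card_mul_sum_sq
    _ ≤ #Y * (#X * (Fintype.card F : ℝ) ^ Fintype.card ι) := by gcongr
    _ = _ := by ring

end DotProduct

lemma approx_div_of_sq_sub_le {N A B q Q η : ℝ} (hq : 0 < q) (hη : 0 < η)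
    (hA : η * Q ≤ A) (hB : η * Q ≤ B) (hηQ : η ^ 4 * Q = q ^ 2)
    (h : (N - A * B / q) ^ 2 ≤ A * B * Q) : Approx N (A * B / q) η := by
  have hQ : 0 < Q := pos_of_mul_pos_right (a := η ^ 4) (by rw [hηQ]; positivity) (by positivity)
  have hηQ₀ : 0 ≤ η * Q := by positivity
  have hA₀ : 0 ≤ A := hηQ₀.trans hA
  have hB₀ : 0 ≤ B := hηQ₀.trans hB
  refine Approx.of_sq_sub_le (by positivity) ?_
  calc (N - A * B / q) ^ 2 ≤ A * B * Q := h
    _ = η ^ 2 * (A * B) * ((η * Q) * (η * Q)) / q ^ 2 := by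
      rw [← hηQ]; field_simp
    _ ≤ η ^ 2 * (A * B) * (A * B) / q ^ 2 := by gcongr
    _ = (A * B / q * η) ^ 2 := by field_simp

lemma rpow_neg_sub_two_div_four_pow_four_mul_pow {q : ℝ} (hq : 0 < q) (k : ℕ) :
    (q ^ (-(((k : ℝ) - 2) / 4))) ^ 4 * q ^ k = q ^ 2 := by
  rw [← Real.rpow_natCast _ 4, ← Real.rpow_mul hq.le, ← Real.rpow_natCast q k,
    ← Real.rpow_add hq, ← Real.rpow_natCast q 2]
  congr 1
  push_cast
  ring

/-- The finite field `F` plays the role of `𝔽_q`; `q = |F|` is automatically a prime power. -/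
theorem inner_product_expander_coloring :
    ∀ (F : Type) [Field F] [Fintype F] [DecidableEq F],
      ∀ k : ℕ, 3 ≤ k →
      ∀ X Y : Finset (Fin k → F),
        (Fintype.card F : ℝ) ^ (-(((k : ℝ) - 2) / 4)) * (Fintype.card F : ℝ) ^ k ≤
          (X.card : ℝ) →
        (Fintype.card F : ℝ) ^ (-(((k : ℝ) - 2) / 4)) * (Fintype.card F : ℝ) ^ k ≤
          (Y.card : ℝ) →
        ∀ v : F,
          Approx (((X ×ˢ Y).filter fun p => (∑ i, p.1 i * p.2 i) = v).card : ℝ)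
            ((X.card : ℝ) * Y.card / Fintype.card F)
            ((Fintype.card F : ℝ) ^ (-(((k : ℝ) - 2) / 4))) := by
  intro F _ _ _ k _ X Y hX hY v
  have hq : (0 : ℝ) < Fintype.card F := by exact_mod_cast Fintype.card_pos
  have hdisc := sq_card_dotProduct_eq_sub_le X Y v
  rw [Fintype.card_fin] at hdisc
  exact approx_div_of_sq_sub_le hq (by positivity) hX hY
    (rpow_neg_sub_two_div_four_pow_four_mul_pow hq k) hdisc
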